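/- Let X be a nonzero real Hilbert space regarded as a Jordan triple with triple product {x,y,z} := (1/2)(⟨x,y⟩z + ⟨z,y⟩x). Then X is ternary weakly amenable (i.e. every continuous linear ternary derivation from X to X* is an inner ternary derivation) if and only if X is finite-dimensional. -/

import Mathlib

set_option maxHeartbeats 2000000
set_option synthInstance.maxHeartbeats 1000000

/-!
STATEMENT 16: Let `X` be a nonzero real Hilbert space, a Jordan triple under
`{x,y,z} := (1/2)(⟨x,y⟩z + ⟨z,y⟩x)`.  Then `X` is ternary weakly amenable (every
continuous linear ternary derivation from `X` to `X*` is an inner ternary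
derivation) if and only if `X` is finite-dimensional.
-/

open scoped RealInnerProductSpace

noncomputable section

variable {X : Type*} [NormedAddCommGroup X] [InnerProductSpace ℝ X] [CompleteSpace X]

/-- The triple product `{x,y,z} = (1/2)(⟨x,y⟩z + ⟨z,y⟩x)` on a real Hilbert space. -/
def jtripR (a b c : X) : X := (2 : ℝ)⁻¹ • (⟪a, b⟫ • c + ⟪c, b⟫ • a)

/-- A map `δ : X → X*` is a ternary derivation, written out pointwise on `X*`,
where `{a,b,φ}(x) = {φ,b,a}(x) := φ({b,a,x})` and `{a,φ,b}(x) := φ({a,x,b})`. -/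
def IsTernaryDerFunR (δ : X → (X →L[ℝ] ℝ)) : Prop :=
  ∀ a b c x : X, δ (jtripR a b c) x
    = δ a (jtripR b c x) + δ b (jtripR a x c) + δ c (jtripR b a x)

/-- A map `δ : X → X*` is an inner ternary derivation: a finite sum of the maps
`a ↦ {b,φ,a} − {φ,b,a}` with `b ∈ X`, `φ ∈ X*`. -/
def IsInnerTernaryDerFunR (δ : X → (X →L[ℝ] ℝ)) : Prop :=
  ∃ (n : ℕ) (b : Fin n → X) (φ : Fin n → (X →L[ℝ] ℝ)),
    ∀ a x : X, δ a x
      = ∑ i, (φ i (jtripR (b i) x a) - φ i (jtripR (b i) a x))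

/-- Every ternary derivation is skew-symmetric as a bilinear form. -/
lemma skew_of_ternaryDer (δ : X →L[ℝ] (X →L[ℝ] ℝ)) (h : IsTernaryDerFunR ⇑δ) :
    ∀ a b : X, δ a b = - δ b a := by
  have key : ∀ a b : X, ⟪a, a⟫ * (δ a b + δ b a) = 0 := by
    intro a b
    have H := h a b a a
    simp only [jtripR, map_smul, map_add, ContinuousLinearMap.smul_apply,
      ContinuousLinearMap.add_apply, ContinuousLinearMap.map_smul,
      ContinuousLinearMap.map_add, smul_eq_mul] at H
    have hc := real_inner_comm a b
    linear_combination -H - (δ a) a * hc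
  intro a b
  rcases eq_or_ne a 0 with rfl | ha
  · simp
  · have h2 := key a b
    have hne : ⟪a, a⟫ ≠ 0 := inner_self_ne_zero.mpr ha
    have := (mul_eq_zero.mp h2).resolve_left hne
    linarith

/-- Every skew-symmetric continuous bilinear form is a ternary derivation. -/
lemma ternaryDer_of_skew (δ : X →L[ℝ] (X →L[ℝ] ℝ)) (h : ∀ a b : X, δ a b = - δ b a) :
    IsTernaryDerFunR ⇑δ := by
  intro a b c x
  simp only [jtripR, map_smul, map_add, ContinuousLinearMap.smul_apply,
    ContinuousLinearMap.add_apply, ContinuousLinearMap.map_smul,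
    ContinuousLinearMap.map_add, smul_eq_mul]
  rw [real_inner_comm b a, real_inner_comm b c, real_inner_comm x c, real_inner_comm x a]
  linear_combination (-(2:ℝ)⁻¹) * (⟪x, c⟫ * (h a b) + ⟪x, a⟫ * (h b c))

/-- In infinite dimensions there is an orthonormal sequence. -/
lemma exists_orthonormal_seq (hninf : ¬ FiniteDimensional ℝ X) :
    ∃ v : ℕ → X, Orthonormal ℝ v := by
  obtain ⟨w, b, hb⟩ := exists_hilbertBasis ℝ X
  have hw : w.Infinite := by
    by_contra hfin
    rw [Set.not_infinite] at hfin
    have h1 : FiniteDimensional ℝ (Submodule.span ℝ w) :=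
      FiniteDimensional.span_of_finite ℝ hfin
    have h2 : (Submodule.span ℝ w).topologicalClosure = ⊤ := by
      have := b.dense_span
      rwa [hb, Subtype.range_coe] at this
    have h3 : (Submodule.span ℝ w) = ⊤ := by
      rw [← h2]
      exact ((Submodule.span ℝ w).closed_of_finiteDimensional).submodule_topologicalClosure_eq.symm
    rw [h3] at h1
    exact hninf (Submodule.topEquiv.finiteDimensional)
  have hon : Orthonormal ℝ ((↑) : w → X) := by rw [← hb]; exact b.orthonormal
  haveI := hw.to_subtype
  exact ⟨fun n => (Infinite.natEmbedding w n : X),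
    hon.comp _ (Infinite.natEmbedding w).injective⟩

/-- Term `n` of the series defining the canonical skew form. -/
def gseq (v : ℕ → X) (n : ℕ) (a x : X) : ℝ :=
  ((2:ℝ)⁻¹)^n * (⟪v (2*n), a⟫ * ⟪v (2*n+1), x⟫ - ⟪v (2*n+1), a⟫ * ⟪v (2*n), x⟫)

lemma gseq_bound (v : ℕ → X) (hv : Orthonormal ℝ v) (n : ℕ) (a x : X) :
    ‖gseq v n a x‖ ≤ ((2:ℝ)⁻¹)^n * (2 * ‖a‖ * ‖x‖) := by
  have h1 : |⟪v (2*n), a⟫| ≤ ‖a‖ := by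
    simpa [hv.1] using abs_real_inner_le_norm (v (2*n)) a
  have h2 : |⟪v (2*n+1), x⟫| ≤ ‖x‖ := by
    simpa [hv.1] using abs_real_inner_le_norm (v (2*n+1)) x
  have h3 : |⟪v (2*n+1), a⟫| ≤ ‖a‖ := by
    simpa [hv.1] using abs_real_inner_le_norm (v (2*n+1)) a
  have h4 : |⟪v (2*n), x⟫| ≤ ‖x‖ := by
    simpa [hv.1] using abs_real_inner_le_norm (v (2*n), x).1 (v (2*n), x).2
  rw [gseq, Real.norm_eq_abs, abs_mul, abs_pow]
  have hpow : |(2:ℝ)⁻¹| = (2:ℝ)⁻¹ := by norm_num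
  rw [hpow]
  refine mul_le_mul_of_nonneg_left ?_ (by positivity)
  calc |⟪v (2*n), a⟫ * ⟪v (2*n+1), x⟫ - ⟪v (2*n+1), a⟫ * ⟪v (2*n), x⟫|
      ≤ |⟪v (2*n), a⟫ * ⟪v (2*n+1), x⟫| + |⟪v (2*n+1), a⟫ * ⟪v (2*n), x⟫| := abs_sub _ _
    _ = |⟪v (2*n), a⟫| * |⟪v (2*n+1), x⟫| + |⟪v (2*n+1), a⟫| * |⟪v (2*n), x⟫| := by
        rw [abs_mul, abs_mul]
    _ ≤ ‖a‖ * ‖x‖ + ‖a‖ * ‖x‖ := by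
        gcongr <;> positivity
    _ = 2 * ‖a‖ * ‖x‖ := by ring

lemma summable_gseq (v : ℕ → X) (hv : Orthonormal ℝ v) (a x : X) :
    Summable (fun n => gseq v n a x) := by
  refine Summable.of_norm_bounded (g := fun n => ((2:ℝ)⁻¹)^n * (2 * ‖a‖ * ‖x‖)) ?_
    (fun n => gseq_bound v hv n a x)
  exact (summable_geometric_of_lt_one (by norm_num) (by norm_num)).mul_right _

/-- The canonical skew-symmetric continuous bilinear form of infinite rank. -/
def deltaOf (v : ℕ → X) (hv : Orthonormal ℝ v) : X →L[ℝ] (X →L[ℝ] ℝ) :=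
  LinearMap.mkContinuous₂
    (LinearMap.mk₂ ℝ (fun a x => ∑' n, gseq v n a x)
      (fun a a' x => by
        have h : ∀ n, gseq v n (a + a') x = gseq v n a x + gseq v n a' x := by
          intro n; simp only [gseq, inner_add_right]; ring
        rw [tsum_congr h]
        exact Summable.tsum_add (summable_gseq v hv a x) (summable_gseq v hv a' x))
      (fun c a x => by
        have h : ∀ n, gseq v n (c • a) x = c * gseq v n a x := by
          intro n; simp only [gseq, real_inner_smul_right]; ring
        rw [tsum_congr h, tsum_mul_left]; rfl)
      (fun a x x' => by
        have h : ∀ n, gseq v n a (x + x') = gseq v n a x + gseq v n a x' := by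
          intro n; simp only [gseq, inner_add_right]; ring
        rw [tsum_congr h]
        exact Summable.tsum_add (summable_gseq v hv a x) (summable_gseq v hv a x'))
      (fun c a x => by
        have h : ∀ n, gseq v n a (c • x) = c * gseq v n a x := by
          intro n; simp only [gseq, real_inner_smul_right]; ring
        rw [tsum_congr h, tsum_mul_left]; rfl))
    4
    (by
      intro a x
      have hgeo : HasSum (fun n => ((2:ℝ)⁻¹)^n * (2 * ‖a‖ * ‖x‖))
          ((1 - (2:ℝ)⁻¹)⁻¹ * (2 * ‖a‖ * ‖x‖)) :=
        (hasSum_geometric_of_lt_one (by norm_num) (by norm_num)).mul_right _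
      have hb := tsum_of_norm_bounded hgeo (fun n => gseq_bound v hv n a x)
      have : ((1 - (2:ℝ)⁻¹)⁻¹ * (2 * ‖a‖ * ‖x‖)) = 4 * ‖a‖ * ‖x‖ := by norm_num; ring
      rw [this] at hb
      exact hb)

lemma deltaOf_apply (v : ℕ → X) (hv : Orthonormal ℝ v) (a x : X) :
    deltaOf v hv a x = ∑' n, gseq v n a x := rfl

lemma deltaOf_skew (v : ℕ → X) (hv : Orthonormal ℝ v) (a x : X) :
    deltaOf v hv a x = - deltaOf v hv x a := by
  rw [deltaOf_apply, deltaOf_apply, ← tsum_neg]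
  refine tsum_congr fun n => ?_
  simp only [gseq]; ring

lemma deltaOf_even (v : ℕ → X) (hv : Orthonormal ℝ v) (k : ℕ) :
    deltaOf v hv (v (2*k)) = ((2:ℝ)⁻¹)^k • innerSL ℝ (v (2*k+1)) := by
  have hvi : ∀ i j : ℕ, ⟪v i, v j⟫ = if i = j then (1:ℝ) else 0 :=
    fun i j => orthonormal_iff_ite.mp hv i j
  ext x
  rw [deltaOf_apply]
  have hterm : ∀ n, gseq v n (v (2*k)) x
      = if n = k then ((2:ℝ)⁻¹)^k * ⟪v (2*k+1), x⟫ else 0 := by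
    intro n
    rw [gseq]
    rcases eq_or_ne n k with rfl | hne
    · rw [hvi, hvi]
      simp
    · rw [hvi, hvi]
      have h1 : 2*n ≠ 2*k := by omega
      have h2 : 2*n+1 ≠ 2*k := by omega
      simp [h1, h2, hne]
  rw [tsum_congr hterm, tsum_ite_eq]
  simp

/-- A nonzero real Hilbert space is ternary weakly amenable iff it is
finite-dimensional. -/
theorem hilbert_ternary_weakly_amenable_iff_finiteDimensional [Nontrivial X] :
    (∀ δ : X →L[ℝ] (X →L[ℝ] ℝ), IsTernaryDerFunR ⇑δ → IsInnerTernaryDerFunR ⇑δ)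
      ↔ FiniteDimensional ℝ X := by
  constructor
  · -- weak amenability implies finite-dimensionality
    intro hWA
    by_contra hninf
    obtain ⟨v, hv⟩ := exists_orthonormal_seq hninf
    have hvi : ∀ i j : ℕ, ⟪v i, v j⟫ = if i = j then (1:ℝ) else 0 :=
      fun i j => orthonormal_iff_ite.mp hv i j
    obtain ⟨m, bb, φ, hrep⟩ :=
      hWA (deltaOf v hv) (ternaryDer_of_skew _ (deltaOf_skew v hv))
    set δ := deltaOf v hv with hδ
    -- all values of δ lie in a fixed finite-dimensional space of functionals
    set W : Submodule ℝ (X →L[ℝ] ℝ) :=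
      Submodule.span ℝ (Set.range φ ∪ Set.range (fun i => innerSL ℝ (bb i))) with hW
    haveI hWfd : FiniteDimensional ℝ W :=
      FiniteDimensional.span_of_finite ℝ ((Set.finite_range φ).union (Set.finite_range _))
    have hmem : ∀ a : X, δ a ∈ W := by
      intro a
      have hexp : δ a = ∑ i, (((2:ℝ)⁻¹ * φ i a) • innerSL ℝ (bb i)
          + (-((2:ℝ)⁻¹ * ⟪bb i, a⟫)) • φ i) := by
        ext x
        rw [ContinuousLinearMap.sum_apply, hrep a x]
        refine Finset.sum_congr rfl fun i _ => ?_
        simp only [jtripR, map_smul, map_add, ContinuousLinearMap.add_apply,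
          ContinuousLinearMap.smul_apply, innerSL_apply_apply, smul_eq_mul]
        linear_combination (-(2:ℝ)⁻¹) * (φ i) (bb i) * (real_inner_comm a x)
      rw [hexp]
      refine Submodule.sum_mem _ fun i _ => Submodule.add_mem _ ?_ ?_
      · exact Submodule.smul_mem _ _ (Submodule.subset_span (Or.inr ⟨i, rfl⟩))
      · exact Submodule.smul_mem _ _ (Submodule.subset_span (Or.inl ⟨i, rfl⟩))
    have hmem2 : ∀ k : ℕ, innerSL ℝ (v (2*k+1)) ∈ W := by
      intro k
      have h0 := hmem (v (2*k))
      rw [hδ, deltaOf_even v hv k] at h0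
      have h1 : innerSL ℝ (v (2*k+1))
          = ((2:ℝ)^k) • (((2:ℝ)⁻¹)^k • innerSL ℝ (v (2*k+1))) := by
        rw [smul_smul, ← mul_pow]
        norm_num
      rw [h1]
      exact W.smul_mem _ h0
    -- but these functionals are linearly independent, contradiction
    have hlin : LinearIndependent ℝ (fun k : ℕ => (⟨innerSL ℝ (v (2*k+1)), hmem2 k⟩ : W)) := by
      refine (linearIndependent_iff' (R := ℝ) (M := W)).mpr ?_
      intro s g hg i hi
      have := congrArg (fun z : W => (z : X →L[ℝ] ℝ) (v (2*i+1))) hg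
      simp only [Submodule.coe_sum, Submodule.coe_smul, ContinuousLinearMap.sum_apply,
        ContinuousLinearMap.smul_apply, innerSL_apply_apply, smul_eq_mul,
        Submodule.coe_zero, ContinuousLinearMap.zero_apply] at this
      rw [Finset.sum_eq_single i] at this
      · rwa [hvi, if_pos rfl, mul_one] at this
      · intro j hj hji
        rw [hvi, if_neg (by omega), mul_zero]
      · intro h; exact absurd hi h
    exact Module.Finite.not_linearIndependent_of_infinite _ hlin
  · -- finite-dimensional implies ternary weak amenability
    intro hfin δ hδ
    haveI := hfin
    have hskew := skew_of_ternaryDer δ hδ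
    let e := stdOrthonormalBasis ℝ X
    refine ⟨Module.finrank ℝ X, fun i => e i, fun i => -(δ (e i)), fun a x => ?_⟩
    have hterm : ∀ i, ((-(δ (e i))) (jtripR (e i) x a) - (-(δ (e i))) (jtripR (e i) a x))
        = (2:ℝ)⁻¹ * (⟪e i, a⟫ * δ (e i) x - ⟪e i, x⟫ * δ (e i) a) := by
      intro i
      simp only [jtripR, map_smul, map_add, ContinuousLinearMap.neg_apply,
        ContinuousLinearMap.map_add, ContinuousLinearMap.map_smul, smul_eq_mul]
      linear_combination (2:ℝ)⁻¹ * (δ (e i)) (e i) * (real_inner_comm a x)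
    rw [Finset.sum_congr rfl fun i _ => hterm i]
    have hy : ∀ y z : X, ∑ i, ⟪e i, y⟫ * δ (e i) z = δ y z := by
      intro y z
      calc ∑ i, ⟪e i, y⟫ * δ (e i) z = δ (∑ i, ⟪e i, y⟫ • e i) z := by
            rw [map_sum, ContinuousLinearMap.sum_apply]
            refine Finset.sum_congr rfl fun i _ => ?_
            rw [map_smul, ContinuousLinearMap.smul_apply, smul_eq_mul]
        _ = δ y z := by rw [e.sum_repr' y]
    have hsplit : ∑ i, (2:ℝ)⁻¹ * (⟪e i, a⟫ * δ (e i) x - ⟪e i, x⟫ * δ (e i) a)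
        = (2:ℝ)⁻¹ * (δ a x - δ x a) := by
      rw [← Finset.mul_sum, Finset.sum_sub_distrib, hy a x, hy x a]
    rw [hsplit]
    have := hskew a x
    linarith
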